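/- arXiv:1210.5286 — 9 statements merged into one kernel-verified Lean document; each statement's English description precedes it below -/
import Mathlib

section
/- Let V be a real normed vector space, let v ∈ V with ‖v‖ = 1, and suppose the norm function x ↦ ‖x‖ is Fréchet differentiable at v with derivative φ (a continuous linear functional on V). Then for every w ∈ V with φ(w) = 0 and every s ∈ ℝ, one has ‖s • v + w‖ ≥ |s|. If moreover V is a strictly convex normed space and ‖s • v + w‖ = |s| for some s ≠ 0, then w = 0. -/
/-!
The derivative `φ` of the norm at a unit vector `v` has operator norm at most `1` (the norm is
`1`-Lipschitz) and satisfies `φ v = 1`, so `φ (s • v + w) = s` bounds `‖s • v + w‖` from below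
by `|s|`. In the equality case both `s • v` and `s • v + w` are vectors of norm `|s|` on which
`|φ|` attains the norm, with the same value of `φ`; strict convexity forces them to coincide.
-/

open Set

namespace ContinuousLinearMap

variable {V : Type*} [NormedAddCommGroup V] [NormedSpace ℝ V]

lemma abs_apply_le_norm_of_opNorm_le_one {φ : V →L[ℝ] ℝ} (hφ : ‖φ‖ ≤ 1) (x : V) :
    |φ x| ≤ ‖x‖ := by
  simpa using φ.le_of_opNorm_le hφ x

/-- For `x ≠ y` in this set with `φ x = φ y`, `‖x + y‖ ≥ |φ (x + y)| = ‖x‖ + ‖y‖` would be an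
equality case of the triangle inequality. -/
lemma injOn_setOf_norm_eq_abs_apply [StrictConvexSpace ℝ V] {φ : V →L[ℝ] ℝ} (hφ : ‖φ‖ ≤ 1) :
    InjOn φ {x | ‖x‖ = |φ x|} := by
  intro x (hx : ‖x‖ = |φ x|) y (hy : ‖y‖ = |φ y|) hxy
  refine eq_of_norm_eq_of_norm_add_eq (by rw [hx, hy, hxy]) (le_antisymm (norm_add_le x y) ?_)
  calc ‖x‖ + ‖y‖ = |φ (x + y)| := by
        rw [hx, hy, map_add, hxy, ← two_mul, ← two_mul, abs_mul, abs_two]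
    _ ≤ ‖x + y‖ := abs_apply_le_norm_of_opNorm_le_one hφ _

end ContinuousLinearMap

open ContinuousLinearMap

/-- If the norm of a real normed space is Fréchet differentiable at a unit vector `v`
with derivative `φ`, then for every `w` in the kernel of `φ` (the "orthogonal complement"
of `v`) and every `s ∈ ℝ` one has `‖s • v + w‖ ≥ |s|`; if moreover the space is strictly
convex and equality holds for some `s ≠ 0`, then `w = 0`. -/
theorem norm_add_orthogonal_ge_abs
    {V : Type*} [NormedAddCommGroup V] [NormedSpace ℝ V]
    (v : V) (hv : ‖v‖ = 1) (φ : V →L[ℝ] ℝ)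
    (hderiv : HasFDerivAt (fun x : V => ‖x‖) φ v)
    (w : V) (hw : φ w = 0) :
    (∀ s : ℝ, |s| ≤ ‖s • v + w‖) ∧
    (StrictConvexSpace ℝ V → ∀ s : ℝ, s ≠ 0 → ‖s • v + w‖ = |s| → w = 0) := by
  have hφ : ‖φ‖ ≤ 1 := by simpa using hderiv.le_of_lipschitz lipschitzWith_one_norm
  have hφv : φ v = 1 := hv ▸ hderiv.fderiv ▸ hderiv.differentiableAt.fderiv_norm_self
  have hφ_add (s : ℝ) : φ (s • v + w) = s := by simp [hφv, hw]
  have h_lower (s : ℝ) : |s| ≤ ‖s • v + w‖ := by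
    simpa only [hφ_add] using abs_apply_le_norm_of_opNorm_le_one hφ (s • v + w)
  refine ⟨h_lower, fun _ s _ heq => ?_⟩
  have hsv : ‖s • v‖ = |φ (s • v)| := by simp [norm_smul, hv, hφv]
  have hsvw : ‖s • v + w‖ = |φ (s • v + w)| := by rw [heq, hφ_add]
  have h_eq : s • v = s • v + w :=
    injOn_setOf_norm_eq_abs_apply hφ hsv hsvw (by simp [hφv, hw])
  simpa using h_eq.symm
end

section
/- Let V be a real normed vector space, let v ∈ V with ‖v‖ = 1, and suppose the norm function x ↦ ‖x‖ is Fréchet differentiable at v with derivative φ. Then for every w ∈ V with φ(w) = 0, the function s ↦ ‖s • v + w‖ − |s| tends to 0 as s → +∞, and also tends to 0 as s → −∞. -/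
open Filter Asymptotics

lemma aux_norm_sub_abs_tendsto_zero
    {V : Type*} [NormedAddCommGroup V] [NormedSpace ℝ V]
    (v : V) (hv : ‖v‖ = 1) (φ : V →L[ℝ] ℝ)
    (hderiv : HasFDerivAt (fun x : V => ‖x‖) φ v)
    (w : V) (hw : φ w = 0) :
    Tendsto (fun s : ℝ => ‖s • v + w‖ - |s|) atTop (nhds 0) := by
  have h1 : Tendsto (fun s : ℝ => v + s⁻¹ • w) atTop (nhds v) := by
    have := (tendsto_inv_atTop_zero (𝕜 := ℝ)).smul_const w
    simpa using tendsto_const_nhds.add this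
  have h2 := hderiv.isLittleO.comp_tendsto h1
  have h2' : (fun s : ℝ => ‖v + s⁻¹ • w‖ - 1) =o[atTop] (fun s : ℝ => ‖s⁻¹ • w‖) := by
    refine ((h2.congr ?_ ?_).norm_right)
    · intro s
      simp [hv, hw, map_smul]
    · intro s; simp
  have h3 : (fun s : ℝ => s * (‖v + s⁻¹ • w‖ - 1)) =o[atTop]
      (fun s : ℝ => s * ‖s⁻¹ • w‖) :=
    (isBigO_refl (fun s : ℝ => s) atTop).mul_isLittleO h2'
  have h4 : (fun s : ℝ => s * (‖v + s⁻¹ • w‖ - 1)) =o[atTop]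
      (fun _ : ℝ => ‖w‖ + 1) := by
    refine h3.trans_isBigO (IsBigO.of_bound 1 ?_)
    filter_upwards [eventually_gt_atTop (0:ℝ)] with s hs
    have : s * ‖s⁻¹ • w‖ = ‖w‖ := by
      rw [norm_smul, norm_inv, Real.norm_eq_abs, abs_of_pos hs]
      field_simp
    rw [this]
    have h0 : (0:ℝ) ≤ ‖w‖ := norm_nonneg w
    simp only [Real.norm_eq_abs, abs_of_nonneg h0, abs_of_nonneg (by linarith : (0:ℝ) ≤ ‖w‖ + 1), one_mul]
    linarith
  have h5 : Tendsto (fun s : ℝ => s * (‖v + s⁻¹ • w‖ - 1)) atTop (nhds 0) :=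
    (isLittleO_const_iff (by positivity : ‖w‖ + 1 ≠ 0)).mp h4
  refine h5.congr' ?_
  filter_upwards [eventually_gt_atTop (0:ℝ)] with s hs
  have hne : s ≠ 0 := ne_of_gt hs
  have : ‖s • v + w‖ = s * ‖v + s⁻¹ • w‖ := by
    rw [show s • v + w = s • (v + s⁻¹ • w) by
      rw [smul_add, smul_smul, mul_inv_cancel₀ hne, one_smul]]
    rw [norm_smul, Real.norm_eq_abs, abs_of_pos hs]
  rw [this, abs_of_pos hs]
  ring

/-- If the norm of a real normed space is Fréchet differentiable at a unit vector `v`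
with derivative `φ`, then for every `w` in the kernel of `φ`, the function
`s ↦ ‖s • v + w‖ − |s|` tends to `0` as `s → +∞` and as `s → −∞`. -/
theorem norm_sub_abs_tendsto_zero
    {V : Type*} [NormedAddCommGroup V] [NormedSpace ℝ V]
    (v : V) (hv : ‖v‖ = 1) (φ : V →L[ℝ] ℝ)
    (hderiv : HasFDerivAt (fun x : V => ‖x‖) φ v)
    (w : V) (hw : φ w = 0) :
    Tendsto (fun s : ℝ => ‖s • v + w‖ - |s|) atTop (nhds 0) ∧
    Tendsto (fun s : ℝ => ‖s • v + w‖ - |s|) atBot (nhds 0) := by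
  refine ⟨aux_norm_sub_abs_tendsto_zero v hv φ hderiv w hw, ?_⟩
  have hderiv' : HasFDerivAt (fun x : V => ‖x‖) (-φ) (-v) := by
    have hneg : HasFDerivAt (fun x : V => -x) (-(ContinuousLinearMap.id ℝ V)) (-v) :=
      (hasFDerivAt_id (-v)).neg
    have := HasFDerivAt.comp (-v) (show HasFDerivAt (fun x : V => ‖x‖) φ (-(-v)) by simpa using hderiv) hneg
    simpa [Function.comp_def, norm_neg] using this
  have haux := aux_norm_sub_abs_tendsto_zero (-v) (by simpa using hv) (-φ) hderiv' w
    (by simp [hw])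
  have := haux.comp tendsto_neg_atBot_atTop
  refine this.congr ?_
  intro s
  simp [neg_smul, smul_neg, abs_neg]
end

section
/- Let V be a strictly convex real normed vector space and let a, b ∈ V be linearly independent. Then the function t ↦ ‖a + t • b‖ is strictly convex on ℝ. -/
/-- In a strictly convex real normed space, if `a` and `b` are linearly independent then
the function `t ↦ ‖a + t • b‖` is strictly convex on `ℝ`. -/
theorem strictConvexOn_norm_add_smul
    {V : Type*} [NormedAddCommGroup V] [NormedSpace ℝ V] [StrictConvexSpace ℝ V]
    (a b : V) (h : LinearIndependent ℝ ![a, b]) :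
    StrictConvexOn ℝ Set.univ (fun t : ℝ => ‖a + t • b‖) := by
  have hpair : ∀ s t : ℝ, s • a + t • b = 0 → s = 0 ∧ t = 0 :=
    LinearIndependent.pair_iff.mp h
  refine ⟨convex_univ, ?_⟩
  intro x _ y _ hxy α β hα hβ hαβ
  have key : ¬ SameRay ℝ (a + x • b) (a + y • b) := by
    rintro (h0 | h0 | ⟨r₁, r₂, hr₁, hr₂, hr⟩)
    · have := hpair 1 x (by rw [one_smul]; exact h0)
      exact one_ne_zero this.1
    · have := hpair 1 y (by rw [one_smul]; exact h0)
      exact one_ne_zero this.1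
    · have heq : (r₁ - r₂) • a + (r₁ * x - r₂ * y) • b = 0 := by
        have : r₁ • (a + x • b) - r₂ • (a + y • b) = 0 := by rw [hr]; simp
        rw [smul_add, smul_add, smul_smul, smul_smul] at this
        rw [sub_smul, sub_smul]
        linear_combination (norm := module) this
      obtain ⟨h1, h2⟩ := hpair _ _ heq
      have hr12 : r₁ = r₂ := by linarith [sub_eq_zero.mp h1]
      apply hxy
      have hx : r₁ * x = r₁ * y := by
        rw [hr12] at h2 ⊢
        linarith [sub_eq_zero.mp h2]
      exact mul_left_cancel₀ (ne_of_gt hr₁) hx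
  have hkey2 : ¬ SameRay ℝ (α • (a + x • b)) (β • (a + y • b)) := by
    intro hsr
    apply key
    have h1 := hsr.pos_smul_left (a := α⁻¹) (inv_pos.mpr hα)
    have h2 := h1.pos_smul_right (a := β⁻¹) (inv_pos.mpr hβ)
    rwa [smul_smul, smul_smul, inv_mul_cancel₀ hα.ne', inv_mul_cancel₀ hβ.ne',
      one_smul, one_smul] at h2
  have hlt := norm_add_lt_of_not_sameRay hkey2
  have heq : a + (α • x + β • y) • b = α • (a + x • b) + β • (a + y • b) := by
    have hb : β = 1 - α := by linarith
    subst hb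
    simp only [smul_eq_mul]
    module
  simp only []
  rw [heq]
  calc ‖α • (a + x • b) + β • (a + y • b)‖
      < ‖α • (a + x • b)‖ + ‖β • (a + y • b)‖ := hlt
    _ = α * ‖a + x • b‖ + β * ‖a + y • b‖ := by
        rw [norm_smul, norm_smul, Real.norm_of_nonneg hα.le, Real.norm_of_nonneg hβ.le]
end

section
/- Let V be a strictly convex real normed vector space and let γ : [0,1] → V be a path from x to y. Then the length of γ (its total variation) is at least ‖x − y‖, and if the length of γ equals ‖x − y‖, then the image of γ is contained in the straight segment [x, y] = {(1−t) • x + t • y : t ∈ [0,1]}. In particular, in a strictly convex normed space straight segments are the unique shortest paths between their endpoints. -/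
/-- In a strictly convex real normed space, the length (total variation) of any path from
`x` to `y` is at least `‖x − y‖`, and in the case of equality the image of the path is
contained in the straight segment `[x, y]`; in particular straight segments are the unique
shortest paths between their endpoints. -/
theorem length_ge_dist_and_eq_implies_segment
    {V : Type*} [NormedAddCommGroup V] [NormedSpace ℝ V] [StrictConvexSpace ℝ V]
    (γ : ℝ → V) (hγ : ContinuousOn γ (Set.Icc 0 1))
    (x y : V) (hx : γ 0 = x) (hy : γ 1 = y) :
    ENNReal.ofReal ‖x - y‖ ≤ eVariationOn γ (Set.Icc 0 1) ∧
    (eVariationOn γ (Set.Icc 0 1) = ENNReal.ofReal ‖x - y‖ →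
      ∀ t ∈ Set.Icc (0:ℝ) 1, γ t ∈ segment ℝ x y) := by
  have h01 : (0:ℝ) ∈ Set.Icc (0:ℝ) 1 := by norm_num
  have h11 : (1:ℝ) ∈ Set.Icc (0:ℝ) 1 := by norm_num
  have hedist : ENNReal.ofReal ‖x - y‖ = edist x y := by
    rw [edist_dist, dist_eq_norm]
  have hge : ENNReal.ofReal ‖x - y‖ ≤ eVariationOn γ (Set.Icc 0 1) := by
    rw [hedist, ← hx, ← hy]
    exact eVariationOn.edist_le γ h01 h11
  refine ⟨hge, fun heq t ht => ?_⟩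
  have hsplit : eVariationOn γ (Set.Icc 0 1 ∩ Set.Icc 0 t)
      + eVariationOn γ (Set.Icc 0 1 ∩ Set.Icc t 1)
      = eVariationOn γ (Set.Icc 0 1 ∩ Set.Icc 0 1) :=
    eVariationOn.Icc_add_Icc γ ht.1 ht.2 ht
  rw [Set.inter_self, Set.inter_eq_right.2 (Set.Icc_subset_Icc le_rfl ht.2),
    Set.inter_eq_right.2 (Set.Icc_subset_Icc ht.1 le_rfl)] at hsplit
  have h1 : edist x (γ t) ≤ eVariationOn γ (Set.Icc 0 t) := by
    rw [← hx]; exact eVariationOn.edist_le γ ⟨le_rfl, ht.1⟩ ⟨ht.1, le_rfl⟩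
  have h2 : edist (γ t) y ≤ eVariationOn γ (Set.Icc t 1) := by
    rw [← hy]; exact eVariationOn.edist_le γ ⟨le_rfl, ht.2⟩ ⟨ht.2, le_rfl⟩
  have htri : edist x y ≤ edist x (γ t) + edist (γ t) y := edist_triangle _ _ _
  have hle : edist x (γ t) + edist (γ t) y ≤ edist x y := by
    calc edist x (γ t) + edist (γ t) y ≤ eVariationOn γ (Set.Icc 0 t)
          + eVariationOn γ (Set.Icc t 1) := add_le_add h1 h2
      _ = eVariationOn γ (Set.Icc 0 1) := hsplit
      _ = edist x y := by rw [heq, hedist]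
  have heq2 : edist x (γ t) + edist (γ t) y = edist x y := le_antisymm hle htri
  have hd : dist x (γ t) + dist (γ t) y = dist x y := by
    have := congrArg ENNReal.toReal heq2
    rwa [ENNReal.toReal_add (edist_ne_top _ _) (edist_ne_top _ _),
      ← dist_edist, ← dist_edist, ← dist_edist] at this
  exact ((dist_add_dist_eq_iff).1 hd).mem_segment
end

section
/- Let X be a metric space, n ≥ 2, and let x₀, …, x_n ∈ X, y₁, …, y_n ∈ X and x'₁, …, x'_{n−1} ∈ X satisfy: y_i is a midpoint of x_{i−1} and x_i for each 1 ≤ i ≤ n, and x'_i is a midpoint of y_i and y_{i+1} for each 1 ≤ i ≤ n−1. Set x'₀ = x₀ and x'_n = x_n. Then max_{1 ≤ i ≤ n} dist(x'_{i−1}, x'_i) ≤ max_{1 ≤ i ≤ n} dist(x_{i−1}, x_i), and Σ_{i=1}^{n} dist(x'_{i−1}, x'_i) ≤ Σ_{i=1}^{n} dist(x_{i−1}, x_i). -/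
/-- `z` is a midpoint of `x` and `y`: `dist x z = dist z y = dist x y / 2`. -/
def IsMidpoint {X : Type*} [MetricSpace X] (z x y : X) : Prop :=
  dist x z = dist x y / 2 ∧ dist z y = dist x y / 2

/-- **Midpoint shortening step.** If `y i` is a midpoint of `x (i-1)` and `x i`
(`1 ≤ i ≤ n`), `x' i` is a midpoint of `y i` and `y (i+1)` (`1 ≤ i ≤ n−1`), and
`x' 0 = x 0`, `x' n = x n`, then both the maximal edge length and the total length of the
broken geodesic do not increase. -/
theorem midpoint_shortening_delta_and_length
    {X : Type*} [MetricSpace X] (n : ℕ) (hn : 2 ≤ n)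
    (x y x' : ℕ → X)
    (hy : ∀ i, 1 ≤ i → i ≤ n → IsMidpoint (y i) (x (i - 1)) (x i))
    (hx' : ∀ i, 1 ≤ i → i ≤ n - 1 → IsMidpoint (x' i) (y i) (y (i + 1)))
    (h0 : x' 0 = x 0) (hN : x' n = x n) :
    (Finset.Icc 1 n).sup' (Finset.nonempty_Icc.mpr (by omega))
        (fun i => dist (x' (i - 1)) (x' i)) ≤
      (Finset.Icc 1 n).sup' (Finset.nonempty_Icc.mpr (by omega))
        (fun i => dist (x (i - 1)) (x i)) ∧
    ∑ i ∈ Finset.Icc 1 n, dist (x' (i - 1)) (x' i) ≤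
      ∑ i ∈ Finset.Icc 1 n, dist (x (i - 1)) (x i) := by
  have hn1 : 1 ≤ n - 1 := by omega
  set S : ℕ → ℝ := fun i => if i = 0 then dist (x 0) (x 1)
    else if n ≤ i then dist (x (n - 1)) (x n) else dist (y i) (y (i + 1)) with hSdef
  have hS0 : S 0 = dist (x 0) (x 1) := by simp [hSdef]
  have hSn : S n = dist (x (n - 1)) (x n) := by
    simp only [hSdef]; rw [if_neg (by omega), if_pos le_rfl]
  have hSmid : ∀ i, 1 ≤ i → i ≤ n - 1 → S i = dist (y i) (y (i + 1)) := by
    intro i h1 h2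
    simp only [hSdef]; rw [if_neg (by omega), if_neg (by omega)]
  -- bound on midpoint distances
  have hB : ∀ i, 1 ≤ i → i ≤ n - 1 →
      S i ≤ dist (x (i - 1)) (x i) / 2 + dist (x i) (x (i + 1)) / 2 := by
    intro i h1 h2
    rw [hSmid i h1 h2]
    have h1' := (hy i h1 (by omega)).2
    have h2' := (hy (i + 1) (by omega) (by omega)).1
    have e : i + 1 - 1 = i := by omega
    rw [e] at h2'
    calc dist (y i) (y (i + 1)) ≤ dist (y i) (x i) + dist (x i) (y (i + 1)) :=
          dist_triangle _ _ _
      _ = dist (x (i - 1)) (x i) / 2 + dist (x i) (x (i + 1)) / 2 := by rw [h1', h2']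
  -- bound on new edges
  have hA : ∀ i, i < n → dist (x' i) (x' (i + 1)) ≤ S i / 2 + S (i + 1) / 2 := by
    intro i hi
    rcases eq_or_ne i 0 with rfl | hi0
    · rw [h0, hS0, hSmid 1 le_rfl hn1]
      have hy1 := (hy 1 le_rfl (by omega)).1
      have hx1 := (hx' 1 le_rfl hn1).1
      calc dist (x 0) (x' 1) ≤ dist (x 0) (y 1) + dist (y 1) (x' 1) := dist_triangle _ _ _
        _ = dist (x 0) (x 1) / 2 + dist (y 1) (y 2) / 2 := by
            simpa using congrArg₂ (· + ·) hy1 hx1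
    rcases eq_or_ne i (n - 1) with rfl | hin
    · have e : n - 1 + 1 = n := by omega
      rw [e, hN, hSn, hSmid (n - 1) (by omega) le_rfl, e]
      have hxm := (hx' (n - 1) (by omega) le_rfl).2
      rw [e] at hxm
      have hyn := (hy n (by omega) le_rfl).2
      calc dist (x' (n - 1)) (x n) ≤ dist (x' (n - 1)) (y n) + dist (y n) (x n) :=
            dist_triangle _ _ _
        _ = dist (y (n - 1)) (y n) / 2 + dist (x (n - 1)) (x n) / 2 := by rw [hxm, hyn]
    · rw [hSmid i (by omega) (by omega), hSmid (i + 1) (by omega) (by omega)]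
      have hx1 := (hx' i (by omega) (by omega)).2
      have hx2 := (hx' (i + 1) (by omega) (by omega)).1
      calc dist (x' i) (x' (i + 1))
          ≤ dist (x' i) (y (i + 1)) + dist (y (i + 1)) (x' (i + 1)) := dist_triangle _ _ _
        _ = dist (y i) (y (i + 1)) / 2 + dist (y (i + 1)) (y (i + 2)) / 2 := by rw [hx1, hx2]
  constructor
  · -- sup bound
    set M := (Finset.Icc 1 n).sup' (Finset.nonempty_Icc.mpr (by omega))
        (fun i => dist (x (i - 1)) (x i)) with hM
    have hDM : ∀ i, 1 ≤ i → i ≤ n → dist (x (i - 1)) (x i) ≤ M := fun i h1 h2 =>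
      Finset.le_sup' (fun i => dist (x (i - 1)) (x i)) (Finset.mem_Icc.mpr ⟨h1, h2⟩)
    have hSM : ∀ j, j ≤ n → S j ≤ M := by
      intro j hj
      rcases eq_or_ne j 0 with rfl | hj0
      · rw [hS0]; simpa using hDM 1 le_rfl (by omega)
      rcases eq_or_ne j n with rfl | hjn
      · rw [hSn]; exact hDM _ (by omega) le_rfl
      · refine (hB j (by omega) (by omega)).trans ?_
        have h1 := hDM j (by omega) (by omega)
        have h2 := hDM (j + 1) (by omega) (by omega)
        have e : j + 1 - 1 = j := by omega
        rw [e] at h2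
        linarith
    apply Finset.sup'_le
    intro i hi
    rw [Finset.mem_Icc] at hi
    have hAi := hA (i - 1) (by omega)
    have e : i - 1 + 1 = i := by omega
    rw [e] at hAi
    have h1 := hSM (i - 1) (by omega)
    have h2 := hSM i hi.2
    linarith
  · -- sum bound
    have key : ∀ m, 1 ≤ m → m ≤ n →
        ∑ i ∈ Finset.range m, (S i / 2 + S (i + 1) / 2) ≤
          (∑ i ∈ Finset.range m, dist (x i) (x (i + 1)))
            - dist (x (m - 1)) (x m) / 2 + S m / 2 := by
      intro m
      induction m with
      | zero => omega
      | succ k ih =>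
        intro _ hk
        rcases eq_or_ne k 0 with rfl | hk0
        · simp only [Finset.sum_range_one, Finset.sum_range_succ, Finset.sum_range_zero,
            zero_add, hS0]
          have hd : (0:ℝ) ≤ dist (x 0) (x 1) := dist_nonneg
          norm_num
          linarith
        · have ihk := ih (by omega) (by omega)
          have hBk := hB k (by omega) (by omega)
          rw [Finset.sum_range_succ, Finset.sum_range_succ
            (f := fun i => dist (x i) (x (i + 1)))]
          have e : k + 1 - 1 = k := by omega
          rw [e]
          have ek : k - 1 + 1 = k := by omega
          linarith
    have keyn := key n (by omega) le_rfl
    rw [hSn] at keyn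
    have reidx : ∀ z : ℕ → X, ∑ i ∈ Finset.Icc 1 n, dist (z (i - 1)) (z i)
        = ∑ i ∈ Finset.range n, dist (z i) (z (i + 1)) := by
      intro z
      rw [← Finset.Ico_add_one_right_eq_Icc, Finset.sum_Ico_eq_sum_range]
      refine Finset.sum_congr (by congr 1) fun i _ => ?_
      have e1 : 1 + i - 1 = i := by omega
      have e2 : 1 + i = i + 1 := by omega
      rw [e1, e2]
    rw [reidx x', reidx x]
    calc ∑ i ∈ Finset.range n, dist (x' i) (x' (i + 1))
        ≤ ∑ i ∈ Finset.range n, (S i / 2 + S (i + 1) / 2) :=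
          Finset.sum_le_sum fun i hi => hA i (Finset.mem_range.mp hi)
      _ ≤ ∑ i ∈ Finset.range n, dist (x i) (x (i + 1)) := by linarith
end

section
/- Let X be a metric space, n ≥ 2, and let x₀, …, x_n ∈ X, y₁, …, y_n ∈ X and x'₁, …, x'_{n−1} ∈ X satisfy: y_i is a midpoint of x_{i−1} and x_i for each 1 ≤ i ≤ n, and x'_i is a midpoint of y_i and y_{i+1} for each 1 ≤ i ≤ n−1. Set x'₀ = x₀ and x'_n = x_n. Then Σ_{i=1}^{n} dist(x'_{i−1}, x'_i)² ≤ Σ_{i=1}^{n} dist(x_{i−1}, x_i)². -/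
open Finset

section Averaging

noncomputable def avg121 (f : ℕ → ℝ) (i : ℕ) : ℝ := (f (i - 1) + 2 * f i + f (i + 1)) / 4

def padEnds (f : ℕ → ℝ) (n i : ℕ) : ℝ := f (min (max i 1) n)

variable {f : ℕ → ℝ} {n i : ℕ}

theorem padEnds_of_mem_Icc (h₁ : 1 ≤ i) (h₂ : i ≤ n) : padEnds f n i = f i := by
  rw [padEnds, max_eq_left h₁, min_eq_left h₂]

theorem padEnds_zero : padEnds f n 0 = padEnds f n 1 := rfl

theorem padEnds_succ_self : padEnds f n (n + 1) = padEnds f n n := by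
  unfold padEnds
  congr 1
  omega

theorem sq_le_avg121_sq {t : ℝ} (ht₀ : 0 ≤ t) (ht : t ≤ avg121 f i) :
    t ^ 2 ≤ avg121 (fun j => f j ^ 2) i := by
  unfold avg121 at *
  nlinarith [sq_nonneg (f (i - 1) - f i), sq_nonneg (f i - f (i + 1)),
    sq_nonneg (f (i - 1) - f (i + 1))]

theorem sum_Icc_avg121_sub (f : ℕ → ℝ) (n : ℕ) :
    ∑ i ∈ Icc 1 n, (avg121 f i - f i) = ((f (n + 1) - f n) - (f 1 - f 0)) / 4 := by
  induction n with
  | zero => simp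
  | succ n ih =>
    rw [sum_Icc_succ_top (by omega), ih, avg121, Nat.add_sub_cancel]
    ring

theorem sum_avg121_padEnds_sq :
    ∑ i ∈ Icc 1 n, avg121 (fun j => padEnds f n j ^ 2) i = ∑ i ∈ Icc 1 n, f i ^ 2 := by
  have h := sum_Icc_avg121_sub (fun j => padEnds f n j ^ 2) n
  rw [padEnds_succ_self, padEnds_zero, sub_self, sub_self, sub_self, zero_div,
    sum_sub_distrib, sub_eq_zero] at h
  rw [h]
  exact sum_congr rfl fun i hi => by
    rw [padEnds_of_mem_Icc (mem_Icc.1 hi).1 (mem_Icc.1 hi).2]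

theorem sum_sq_le_of_le_avg121_padEnds {t : ℕ → ℝ}
    (ht : ∀ i ∈ Icc 1 n, 0 ≤ t i ∧ t i ≤ avg121 (padEnds f n) i) :
    ∑ i ∈ Icc 1 n, t i ^ 2 ≤ ∑ i ∈ Icc 1 n, f i ^ 2 := by
  refine (sum_le_sum fun i hi => ?_).trans_eq sum_avg121_padEnds_sq
  exact sq_le_avg121_sq (ht i hi).1 (ht i hi).2

end Averaging

theorem IsMidpoint.dist_le {X : Type*} [MetricSpace X] {a b c m m' : X}
    (hm : IsMidpoint m a b) (hm' : IsMidpoint m' b c) :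
    dist m m' ≤ (dist a b + dist b c) / 2 := by
  have := dist_triangle m b m'
  linarith [hm.2, hm'.1]

section MidpointShortening

variable {X : Type*} [MetricSpace X] {n : ℕ} {x y x' : ℕ → X}
  (hy : ∀ i, 1 ≤ i → i ≤ n → IsMidpoint (y i) (x (i - 1)) (x i))
  (hx' : ∀ i, 1 ≤ i → i ≤ n - 1 → IsMidpoint (x' i) (y i) (y (i + 1)))
include hy hx'

local notation "D" => padEnds (fun i => dist (x (i - 1)) (x i)) n

theorem dist_shortened_prev_le (h0 : x' 0 = x 0) {i : ℕ} (h₁ : 1 ≤ i) (h₂ : i ≤ n) :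
    dist (x' (i - 1)) (y i) ≤ (D (i - 1) + D i) / 4 := by
  obtain _ | _ | j := i
  · omega
  · rw [padEnds_zero, padEnds_of_mem_Icc le_rfl h₂, Nat.sub_self, h0, (hy 1 le_rfl h₂).1]
    linarith
  · rw [Nat.add_sub_cancel, (hx' (j + 1) (by omega) (by omega)).2,
      padEnds_of_mem_Icc (by omega) (by omega), padEnds_of_mem_Icc h₁ h₂]
    have := (hy (j + 1) (by omega) (by omega)).dist_le (hy (j + 2) h₁ h₂)
    simp only [Nat.add_sub_cancel] at this ⊢
    linarith

theorem dist_shortened_next_le (hN : x' n = x n) {i : ℕ} (h₁ : 1 ≤ i) (h₂ : i ≤ n) :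
    dist (y i) (x' i) ≤ (D i + D (i + 1)) / 4 := by
  rcases h₂.eq_or_lt with rfl | h₂
  · rw [padEnds_succ_self, padEnds_of_mem_Icc h₁ le_rfl, hN, (hy i h₁ le_rfl).2]
    linarith
  · rw [(hx' i h₁ (by omega)).1, padEnds_of_mem_Icc h₁ h₂.le,
      padEnds_of_mem_Icc (by omega) h₂]
    have := (hy i h₁ h₂.le).dist_le (hy (i + 1) (by omega) h₂)
    simp only [Nat.succ_sub_one]
    linarith

theorem dist_shortened_le_avg121 (h0 : x' 0 = x 0) (hN : x' n = x n) {i : ℕ}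
    (h₁ : 1 ≤ i) (h₂ : i ≤ n) :
    dist (x' (i - 1)) (x' i) ≤ avg121 D i := by
  have := dist_triangle (x' (i - 1)) (y i) (x' i)
  have := dist_shortened_prev_le hy hx' h0 h₁ h₂
  have := dist_shortened_next_le hy hx' hN h₁ h₂
  unfold avg121
  linarith

end MidpointShortening

theorem midpoint_shortening_energy_general
    {X : Type*} [MetricSpace X] (n : ℕ)
    (x y x' : ℕ → X)
    (hy : ∀ i, 1 ≤ i → i ≤ n → IsMidpoint (y i) (x (i - 1)) (x i))
    (hx' : ∀ i, 1 ≤ i → i ≤ n - 1 → IsMidpoint (x' i) (y i) (y (i + 1)))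
    (h0 : x' 0 = x 0) (hN : x' n = x n) :
    ∑ i ∈ Finset.Icc 1 n, dist (x' (i - 1)) (x' i) ^ 2 ≤
      ∑ i ∈ Finset.Icc 1 n, dist (x (i - 1)) (x i) ^ 2 :=
  sum_sq_le_of_le_avg121_padEnds fun _ hi =>
    ⟨dist_nonneg, dist_shortened_le_avg121 hy hx' h0 hN (mem_Icc.1 hi).1 (mem_Icc.1 hi).2⟩

/-- **Energy decrease under midpoint shortening.** If `y i` is a midpoint of `x (i-1)` and
`x i` (`1 ≤ i ≤ n`), `x' i` is a midpoint of `y i` and `y (i+1)` (`1 ≤ i ≤ n−1`), and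
`x' 0 = x 0`, `x' n = x n`, then the energy `Σ dist(x'_{i−1}, x'_i)²` does not exceed
`Σ dist(x_{i−1}, x_i)²`. -/
theorem midpoint_shortening_energy
    {X : Type*} [MetricSpace X] (n : ℕ) (hn : 2 ≤ n)
    (x y x' : ℕ → X)
    (hy : ∀ i, 1 ≤ i → i ≤ n → IsMidpoint (y i) (x (i - 1)) (x i))
    (hx' : ∀ i, 1 ≤ i → i ≤ n - 1 → IsMidpoint (x' i) (y i) (y (i + 1)))
    (h0 : x' 0 = x 0) (hN : x' n = x n) :
    ∑ i ∈ Finset.Icc 1 n, dist (x' (i - 1)) (x' i) ^ 2 ≤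
      ∑ i ∈ Finset.Icc 1 n, dist (x (i - 1)) (x i) ^ 2 :=
  midpoint_shortening_energy_general n x y x' hy hx' h0 hN
end

section
/- There is no continuous function f : [0,1] → ℝ that has a strict local minimum at every point, i.e., such that for every t ∈ [0,1] there is a neighborhood I of t in [0,1] with f(s) > f(t) for all s ∈ I with s ≠ t. -/
/-- There is no continuous function `f : [0,1] → ℝ` having a strict local minimum at
every point. -/
theorem no_continuous_function_strict_local_min_everywhere :
    ¬ ∃ f : Set.Icc (0:ℝ) 1 → ℝ, Continuous f ∧
      ∀ t : Set.Icc (0:ℝ) 1, ∃ I ∈ nhds t, ∀ s ∈ I, s ≠ t → f t < f s := by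
  rintro ⟨f, -, h⟩
  -- choose a countable topological basis
  set b := TopologicalSpace.countableBasis (Set.Icc (0:ℝ) 1) with hb
  have hbasis := TopologicalSpace.isBasis_countableBasis (Set.Icc (0:ℝ) 1)
  have hbct : b.Countable := TopologicalSpace.countable_countableBasis _
  -- for each t pick a basic set U t ∈ b with t ∈ U t and the strict min property on U t
  have key : ∀ t : Set.Icc (0:ℝ) 1, ∃ U ∈ b, t ∈ U ∧ ∀ s ∈ U, s ≠ t → f t < f s := by
    intro t
    obtain ⟨I, hI, hmin⟩ := h t
    obtain ⟨U, hUb, htU, hUI⟩ := hbasis.mem_nhds_iff.mp hI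
    exact ⟨U, hUb, htU, fun s hs hst => hmin s (hUI hs) hst⟩
  choose U hUb htU hmin using key
  -- the map t ↦ U t is injective
  have hinj : Function.Injective U := by
    intro t t' hUeq
    by_contra hne
    have h1 : f t < f t' := hmin t t' (hUeq ▸ htU t') (Ne.symm hne)
    have h2 : f t' < f t := hmin t' t (hUeq ▸ htU t) hne
    linarith
  -- hence Icc 0 1 is countable, contradiction
  have : Countable (Set.Icc (0:ℝ) 1) := by
    haveI : Countable b := hbct.to_subtype
    exact Function.Injective.countable
      (f := fun t => (⟨U t, hUb t⟩ : b)) (fun a a' h => hinj (congrArg Subtype.val h))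
  have huncount : ¬ (Set.Icc (0:ℝ) 1).Countable := by
    intro hc
    have := Cardinal.le_aleph0_iff_set_countable.mpr hc
    rw [Cardinal.mk_Icc_real (by norm_num : (0:ℝ) < 1)] at this
    exact absurd this (not_le.mpr Cardinal.aleph0_lt_continuum)
  exact huncount (Set.countable_coe_iff.mp this)
end

section
/- Let K be a compact metric space, T : K → K a continuous map, and E : K → ℝ a continuous function such that E(T(x)) ≤ E(x) for all x ∈ K, with equality E(T(x)) = E(x) only if T(x) = x. Assume moreover that every fixed point x₀ of T is a strict local minimum of E, i.e., there is a neighborhood U of x₀ with E(y) > E(x₀) for all y ∈ U with y ≠ x₀. Then for every x ∈ K the sequence of iterates T^k(x) converges as k → ∞ to a fixed point of T, and the limit map T^∞ : K → K, T^∞(x) = lim_{k→∞} T^k(x), is continuous. -/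
open Filter

/-- Energy decreases along iterates. -/
lemma aux_iter_le {K : Type*} (T : K → K) (E : K → ℝ) (hdec : ∀ x, E (T x) ≤ E x)
    (z : K) (k : ℕ) : E (T^[k] z) ≤ E z := by
  induction k with
  | zero => simp
  | succ k ih => rw [Function.iterate_succ_apply']; exact (hdec _).trans ih

/-- Trapping lemma near a fixed point which is a strict local minimum. -/
lemma aux_trap {K : Type*} [MetricSpace K] [CompactSpace K]
    (T : K → K) (hT : Continuous T) (E : K → ℝ) (hE : Continuous E)
    (hdec : ∀ x, E (T x) ≤ E x)
    (hmin : ∀ x₀, T x₀ = x₀ → ∃ U ∈ nhds x₀, ∀ y ∈ U, y ≠ x₀ → E x₀ < E y)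
    (y : K) (hy : T y = y) (ε : ℝ) (hε : 0 < ε) :
    ∃ δ ε₀ : ℝ, 0 < δ ∧ δ < ε ∧ 0 < ε₀ ∧
      ∀ z, dist z y < δ → E z < E y + ε₀ → ∀ k, dist (T^[k] z) y < δ := by
  obtain ⟨U, hU, hUmin⟩ := hmin y hy
  obtain ⟨r, hr, hrU⟩ := Metric.nhds_basis_closedBall.mem_iff.mp hU
  set r₁ := min r (ε / 2) with hr₁def
  have hr₁ : 0 < r₁ := lt_min hr (by linarith)
  have hr₁ε : r₁ ≤ ε / 2 := min_le_right _ _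
  have hr₁U : Metric.closedBall y r₁ ⊆ U :=
    (Metric.closedBall_subset_closedBall (min_le_left _ _)).trans hrU
  obtain ⟨δ₀, hδ₀, hδ₀T⟩ := Metric.continuousAt_iff.mp hT.continuousAt (r₁ / 2) (by linarith)
  set δ := min δ₀ (r₁ / 2) with hδdef
  have hδpos : 0 < δ := lt_min hδ₀ (by linarith)
  have hδr : δ ≤ r₁ / 2 := min_le_right _ _
  have hδε : δ < ε := by linarith
  set A := Metric.closedBall y r₁ \ Metric.ball y δ with hAdef
  have hAclosed : IsClosed A := Metric.isClosed_closedBall.sdiff Metric.isOpen_ball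
  have hAU : A ⊆ U := fun p hp => hr₁U hp.1
  have hA : ∃ ε₀ > 0, ∀ b ∈ A, E y + ε₀ ≤ E b := by
    rcases A.eq_empty_or_nonempty with hAe | hAne
    · exact ⟨1, one_pos, by simp [hAe]⟩
    · obtain ⟨a, haA, hamin⟩ := hAclosed.isCompact.exists_isMinOn hAne hE.continuousOn
      have hay : a ≠ y := by
        intro h
        exact haA.2 (h ▸ Metric.mem_ball_self hδpos)
      have hlt : E y < E a := hUmin a (hAU haA) hay
      exact ⟨E a - E y, by linarith, fun b hb => by linarith [isMinOn_iff.mp hamin b hb]⟩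
  obtain ⟨ε₀, hε₀, hε₀A⟩ := hA
  refine ⟨δ, ε₀, hδpos, hδε, hε₀, fun z hz hEz k => ?_⟩
  induction k with
  | zero => simpa using hz
  | succ k ih =>
    rw [Function.iterate_succ_apply']
    have h1 : dist (T (T^[k] z)) y < r₁ / 2 := by
      have := hδ₀T (lt_of_lt_of_le ih (min_le_left _ _))
      rwa [hy] at this
    by_contra hcon
    push_neg at hcon
    have hmem : T (T^[k] z) ∈ A := by
      constructor
      · exact Metric.mem_closedBall.mpr (by linarith)
      · intro h
        exact absurd (Metric.mem_ball.mp h) (not_lt.mpr hcon)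
    have hEk : E (T (T^[k] z)) ≤ E z := by
      have h := aux_iter_le T E hdec z (k + 1)
      rwa [Function.iterate_succ_apply'] at h
    have := hε₀A _ hmem
    linarith

/-- Convergence of iterates to a fixed point. -/
lemma aux_conv {K : Type*} [MetricSpace K] [CompactSpace K]
    (T : K → K) (hT : Continuous T) (E : K → ℝ) (hE : Continuous E)
    (hdec : ∀ x, E (T x) ≤ E x) (heq : ∀ x, E (T x) = E x → T x = x)
    (hmin : ∀ x₀, T x₀ = x₀ → ∃ U ∈ nhds x₀, ∀ y ∈ U, y ≠ x₀ → E x₀ < E y)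
    (x : K) : ∃ y, T y = y ∧ Tendsto (fun k => T^[k] x) atTop (nhds y) := by
  obtain ⟨y, φ, hφmono, hφ⟩ := CompactSpace.tendsto_subseq (fun k => T^[k] x)
  have hEφ : Tendsto (fun j => E (T^[φ j] x)) atTop (nhds (E y)) := (hE.tendsto y).comp hφ
  have hanti : ∀ m n, m ≤ n → E (T^[n] x) ≤ E (T^[m] x) := by
    intro m n hmn
    have h : T^[n] x = T^[n - m] (T^[m] x) := by
      rw [← Function.iterate_add_apply, Nat.sub_add_cancel hmn]
    rw [h]
    exact aux_iter_le T E hdec _ _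
  have hy : T y = y := by
    apply heq
    have h1 : Tendsto (fun j => E (T^[φ j + 1] x)) atTop (nhds (E (T y))) := by
      have he : ∀ j, E (T^[φ j + 1] x) = E (T (T^[φ j] x)) := fun j => by
        rw [Function.iterate_succ_apply']
      simp only [he]
      exact (hE.tendsto _).comp ((hT.tendsto y).comp hφ)
    have h2 : Tendsto (fun j => E (T^[φ j + 1] x)) atTop (nhds (E y)) := by
      refine tendsto_of_tendsto_of_tendsto_of_le_of_le
        (hEφ.comp (tendsto_add_atTop_nat 1)) hEφ (fun j => ?_) (fun j => ?_)
      · exact hanti _ _ (Nat.succ_le_of_lt (hφmono (Nat.lt_succ_self j)))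
      · exact hanti _ _ (Nat.le_succ _)
    exact tendsto_nhds_unique h1 h2
  refine ⟨y, hy, ?_⟩
  rw [Metric.tendsto_atTop]
  intro ε hε
  obtain ⟨δ, ε₀, hδ, hδε, hε₀, htrap⟩ := aux_trap T hT E hE hdec hmin y hy ε hε
  have h1 : ∀ᶠ j in atTop, dist (T^[φ j] x) y < δ := by
    obtain ⟨N, hN⟩ := Metric.tendsto_atTop.mp hφ δ hδ
    exact eventually_atTop.mpr ⟨N, hN⟩
  have h2 : ∀ᶠ j in atTop, E (T^[φ j] x) < E y + ε₀ :=
    hEφ.eventually_lt_const (by linarith)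
  obtain ⟨j, hj1, hj2⟩ := (h1.and h2).exists
  refine ⟨φ j, fun n hn => ?_⟩
  have h : T^[n] x = T^[n - φ j] (T^[φ j] x) := by
    rw [← Function.iterate_add_apply, Nat.sub_add_cancel hn]
  rw [h]
  exact lt_trans (htrap _ hj1 hj2 _) hδε

/-- **Convergence and continuity of the iterated shortening map.**
Let `K` be a compact metric space, `T : K → K` continuous and `E : K → ℝ` continuous with
`E (T x) ≤ E x` for all `x`, equality only when `T x = x`, and such that every fixed point
of `T` is a strict local minimum of `E`. Then for every `x` the iterates `T^[k] x` converge
to a fixed point of `T`, and the limit map `T^∞` is continuous. -/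
theorem iterates_converge_and_limit_continuous
    {K : Type*} [MetricSpace K] [CompactSpace K]
    (T : K → K) (hT : Continuous T)
    (E : K → ℝ) (hE : Continuous E)
    (hdec : ∀ x, E (T x) ≤ E x)
    (heq : ∀ x, E (T x) = E x → T x = x)
    (hmin : ∀ x₀, T x₀ = x₀ → ∃ U ∈ nhds x₀, ∀ y ∈ U, y ≠ x₀ → E x₀ < E y) :
    ∃ Tinf : K → K, Continuous Tinf ∧
      ∀ x : K, T (Tinf x) = Tinf x ∧
        Tendsto (fun k => T^[k] x) atTop (nhds (Tinf x)) := by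
  have hconv := aux_conv T hT E hE hdec heq hmin
  refine ⟨fun x => (hconv x).choose, ?_,
    fun x => ⟨(hconv x).choose_spec.1, (hconv x).choose_spec.2⟩⟩
  rw [continuous_iff_continuousAt]
  intro x
  have hCA : Tendsto (fun x' => (hconv x').choose) (nhds x) (nhds ((hconv x).choose)) := by
    rw [Metric.tendsto_nhds]
    intro ε hε
    set y := (hconv x).choose with hydef
    have hy : T y = y := (hconv x).choose_spec.1
    have hxconv : Tendsto (fun k => T^[k] x) atTop (nhds y) := (hconv x).choose_spec.2
    obtain ⟨δ, ε₀, hδ, hδε, hε₀, htrap⟩ := aux_trap T hT E hE hdec hmin y hy ε hε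
    have h1 : ∀ᶠ k in atTop, dist (T^[k] x) y < δ := by
      obtain ⟨N, hN⟩ := Metric.tendsto_atTop.mp hxconv δ hδ
      exact eventually_atTop.mpr ⟨N, hN⟩
    have h2 : ∀ᶠ k in atTop, E (T^[k] x) < E y + ε₀ :=
      ((hE.tendsto y).comp hxconv).eventually_lt_const (by linarith)
    obtain ⟨N, hN1, hN2⟩ := (h1.and h2).exists
    have hc1 : Continuous fun x' => dist (T^[N] x') y := (hT.iterate N).dist continuous_const
    have hc2 : Continuous fun x' => E (T^[N] x') := hE.comp (hT.iterate N)
    have hopen : ∀ᶠ x' in nhds x, dist (T^[N] x') y < δ ∧ E (T^[N] x') < E y + ε₀ := by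
      have o1 : IsOpen {x' | dist (T^[N] x') y < δ} := isOpen_lt hc1 continuous_const
      have o2 : IsOpen {x' | E (T^[N] x') < E y + ε₀} := isOpen_lt hc2 continuous_const
      exact Filter.eventually_of_mem ((o1.inter o2).mem_nhds ⟨hN1, hN2⟩) fun x' hx' => hx'
    refine hopen.mono fun x' hx' => ?_
    obtain ⟨hx'1, hx'2⟩ := hx'
    have htr := htrap _ hx'1 hx'2
    have hconv' : Tendsto (fun k => T^[k + N] x') atTop (nhds ((hconv x').choose)) :=
      (hconv x').choose_spec.2.comp (tendsto_add_atTop_nat N)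
    have hdist : Tendsto (fun k => dist (T^[k + N] x') y) atTop
        (nhds (dist ((hconv x').choose) y)) := hconv'.dist tendsto_const_nhds
    have hle : dist ((hconv x').choose) y ≤ δ := by
      refine le_of_tendsto hdist (Filter.Eventually.of_forall fun k => ?_)
      have h := htr k
      rw [← Function.iterate_add_apply] at h
      exact h.le
    exact lt_of_le_of_lt hle hδε
  exact hCA
end

section
/- Let V be a real normed vector space and let p, q ∈ V be nonzero vectors such that the norm function x ↦ ‖x‖ is Fréchet differentiable at −p and at −q. Let v₁, …, v_k ∈ V satisfy v₁ + … + v_k = 0. Then there exists an index j ∈ {1, …, k} such that ‖t • v_j − p‖ + ‖t • v_j − q‖ ≥ ‖p‖ + ‖q‖ for all t ≥ 0. -/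
/-!
The function `f x = ‖x - p‖ + ‖x - q‖` is convex and differentiable at `0`, with derivative `L`
the sum of the derivatives of the norm at `-p` and `-q`. Since `∑ L (v i) = L (∑ v i) = 0`, some
`L (v j)` is nonnegative, and the gradient inequality for convex functions gives
`f (t • v j) ≥ f 0 + t * L (v j) ≥ f 0` for `t ≥ 0`.
-/

open Set

theorem ConvexOn.add_fderiv_sub_le {E : Type*} [NormedAddCommGroup E] [NormedSpace ℝ E]
    {f : E → ℝ} {f' : E →L[ℝ] ℝ} {x : E} (hf : ConvexOn ℝ univ f) (hf' : HasFDerivAt f f' x)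
    (y : E) : f x + f' (y - x) ≤ f y := by
  have hline : ConvexOn ℝ univ (f ∘ (AffineMap.lineMap x y : ℝ →ᵃ[ℝ] E)) :=
    hf.comp_affineMap (AffineMap.lineMap x y)
  have hderiv : HasDerivAt (f ∘ (AffineMap.lineMap x y : ℝ →ᵃ[ℝ] E)) (f' (y - x)) 0 := by
    refine HasFDerivAt.comp_hasDerivAt (0 : ℝ) ?_ AffineMap.hasDerivAt_lineMap
    simpa using hf'
  have hslope := hline.le_slope_of_hasDerivWithinAt_Ioi (mem_univ 0) (mem_univ 1) zero_lt_one
    hderiv.hasDerivWithinAt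
  rw [slope_def_field, Function.comp_apply, Function.comp_apply, AffineMap.lineMap_apply_one,
    AffineMap.lineMap_apply_zero, sub_zero, div_one] at hslope
  linarith

theorem hasFDerivAt_norm_sub_const_zero {V : Type*} [NormedAddCommGroup V] [NormedSpace ℝ V]
    {p : V} (hp : DifferentiableAt ℝ (fun x : V => ‖x‖) (-p)) :
    HasFDerivAt (fun x : V => ‖x - p‖) (fderiv ℝ (fun x : V => ‖x‖) (-p)) 0 := by
  have := (zero_sub p ▸ hp.hasFDerivAt).comp (0 : V) ((hasFDerivAt_id (0 : V)).sub_const p)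
  simpa [Function.comp_def] using this

theorem convexOn_univ_norm_sub_add_norm_sub {V : Type*} [NormedAddCommGroup V]
    [NormedSpace ℝ V] (p q : V) : ConvexOn ℝ univ (fun x : V => ‖x - p‖ + ‖x - q‖) := by
  have := (convexOn_univ_dist p).add (convexOn_univ_dist q)
  simp only [dist_eq_norm] at this
  exact this

theorem exists_direction_sum_dist_ge_general
    {V : Type*} [NormedAddCommGroup V] [NormedSpace ℝ V]
    (p q : V)
    (hdp : DifferentiableAt ℝ (fun x : V => ‖x‖) (-p))
    (hdq : DifferentiableAt ℝ (fun x : V => ‖x‖) (-q))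
    (k : ℕ) (hk : 0 < k) (v : Fin k → V) (hsum : ∑ i, v i = 0) :
    ∃ j : Fin k, ∀ t : ℝ, 0 ≤ t →
      ‖p‖ + ‖q‖ ≤ ‖t • v j - p‖ + ‖t • v j - q‖ := by
  set L := fderiv ℝ (fun x : V => ‖x‖) (-p) + fderiv ℝ (fun x : V => ‖x‖) (-q)
  have hderiv : HasFDerivAt (fun x : V => ‖x - p‖ + ‖x - q‖) L 0 :=
    (hasFDerivAt_norm_sub_const_zero hdp).add (hasFDerivAt_norm_sub_const_zero hdq)
  obtain ⟨j, -, hj⟩ : ∃ j ∈ Finset.univ, (0 : ℝ) ≤ L (v j) :=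
    Finset.exists_le_of_sum_le ⟨⟨0, hk⟩, Finset.mem_univ _⟩
      (by rw [Finset.sum_const_zero, ← map_sum, hsum, map_zero])
  refine ⟨j, fun t ht => ?_⟩
  have hgrad := (convexOn_univ_norm_sub_add_norm_sub p q).add_fderiv_sub_le hderiv (t • v j)
  rw [zero_sub, norm_neg, zero_sub, norm_neg, sub_zero, map_smul, smul_eq_mul] at hgrad
  linarith [mul_nonneg ht hj]

/-- **Key step in Case 3 for saddle surfaces.** If `p, q` are nonzero vectors of a real
normed space whose norm is Fréchet differentiable at `−p` and `−q`, and `v₁ + … + v_k = 0`,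
then along some direction `v_j` the function `x ↦ ‖x − p‖ + ‖x − q‖` never goes below its
value at the origin: `‖t • v_j − p‖ + ‖t • v_j − q‖ ≥ ‖p‖ + ‖q‖` for all `t ≥ 0`. -/
theorem exists_direction_sum_dist_ge
    {V : Type*} [NormedAddCommGroup V] [NormedSpace ℝ V]
    (p q : V) (hp : p ≠ 0) (hq : q ≠ 0)
    (hdp : DifferentiableAt ℝ (fun x : V => ‖x‖) (-p))
    (hdq : DifferentiableAt ℝ (fun x : V => ‖x‖) (-q))
    (k : ℕ) (hk : 0 < k) (v : Fin k → V) (hsum : ∑ i, v i = 0) :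
    ∃ j : Fin k, ∀ t : ℝ, 0 ≤ t →
      ‖p‖ + ‖q‖ ≤ ‖t • v j - p‖ + ‖t • v j - q‖ :=
  exists_direction_sum_dist_ge_general p q hdp hdq k hk v hsum
end
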